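/- Let (X,τ) be a compact Hausdorff space and d a semi metric on X with τ_d weaker than τ. Let ρ be the semi metric on S(C(X,ℂ)) given by ρ(μ,ν) = sup{ |μ(a) − ν(a)| : a ∈ C(X,ℂ), |a(p) − a(q)| ≤ d(p,q) for all p,q ∈ X }. Then for a ∈ C(X,ℂ), the following are equivalent: (1) a is continuous with respect to τ_d; (2) the map ν ↦ ν(a) on S(C(X,ℂ)) is continuous with respect to ρ, i.e., for every state ν and every ε > 0 there is δ > 0 such that every state ν' with ρ(ν',ν) < δ satisfies |ν'(a) − ν(a)| < ε. -/

import Mathlib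

open scoped ENNReal

noncomputable section

variable {X : Type*} [TopologicalSpace X]

/-- A state on the C*-algebra `C(X, ℂ)`: a continuous linear functional sending the unit to `1`
and taking nonnegative real values on positive elements `star a * a`. -/
def IsState (φ : C(X, ℂ) →L[ℂ] ℂ) : Prop :=
  φ 1 = 1 ∧ ∀ a : C(X, ℂ), 0 ≤ (φ (star a * a)).re ∧ (φ (star a * a)).im = 0

/-- The Monge–Kantorovich semi metric `ρ` on functionals on `C(X, ℂ)` associated with a semi
metric `d` on `X`: `ρ(μ, ν) = sup { |μ a - ν a| : a ∈ C(X, ℂ), |a p - a q| ≤ d p q ∀ p q }`,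
with values in `[0, ∞]`. -/
def rho (d : X → X → ℝ) (μ ν : C(X, ℂ) →L[ℂ] ℂ) : ℝ≥0∞ :=
  ⨆ a ∈ {a : C(X, ℂ) | ∀ p q : X, ‖a p - a q‖ ≤ d p q}, (‖μ a - ν a‖₊ : ℝ≥0∞)

/-!
Evaluation at a point is a state, and `ρ(δ_y, δ_x) ≤ d(y, x)`; so continuity of `ν ↦ ν a` at the
point evaluations already gives `d`-continuity of `a`.

Conversely, `τ_d` is coarser than `τ`, so `X` is `d`-compact and a `d`-continuous `a` is
`d`-uniformly continuous. Its real and imaginary parts are then uniform limits of `d`-Lipschitz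
functions. A `K`-Lipschitz `b` satisfies `|ν' b - ν b| ≤ K ρ(ν', ν)`, and a
state is bounded by twice the sup norm, so `|ν' a - ν a| ≤ 4 ‖a - b‖ + K ρ(ν', ν)`.
-/

open scoped ComplexOrder NNReal

section States

variable {φ : C(X, ℂ) →L[ℂ] ℂ}

theorem IsState.apply_nonneg (hφ : IsState φ) {c : C(X, ℂ)} (hc : ∀ x, 0 ≤ c x) : 0 ≤ φ c := by
  let s : C(X, ℂ) := ⟨fun x => ((c x).re.sqrt : ℂ), by fun_prop⟩
  have hs : star s * s = c := by
    ext1 x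
    obtain ⟨hre, him⟩ := Complex.nonneg_iff.1 (hc x)
    apply Complex.ext <;> simp [s, ← him, Real.mul_self_sqrt hre]
  rw [← hs, Complex.nonneg_iff]
  exact ⟨(hφ.2 s).1, (hφ.2 s).2.symm⟩

theorem IsState.norm_apply_ofReal_le (hφ : IsState φ) {r : C(X, ℝ)} {C : ℝ} (hr : ∀ x, |r x| ≤ C) :
    ‖φ ((Complex.ofRealCLM : C(ℝ, ℂ)).comp r)‖ ≤ C := by
  set R : C(X, ℂ) := (Complex.ofRealCLM : C(ℝ, ℂ)).comp r
  have hφC : φ (algebraMap ℂ C(X, ℂ) C) = C := by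
    rw [Algebra.algebraMap_eq_smul_one, map_smul, hφ.1, smul_eq_mul, mul_one]
  have hle : φ R ≤ C := by
    rw [← sub_nonneg, ← hφC, ← map_sub]
    refine hφ.apply_nonneg fun x => ?_
    simpa [R, ← Complex.ofReal_sub, Complex.zero_le_real] using (abs_le.1 (hr x)).2
  have hge : -(C : ℂ) ≤ φ R := by
    rw [← sub_nonneg, sub_neg_eq_add, ← hφC, ← map_add]
    refine hφ.apply_nonneg fun x => ?_
    simpa [R, ← Complex.ofReal_add, Complex.zero_le_real] using
      neg_le_iff_add_nonneg.1 (abs_le.1 (hr x)).1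
  obtain ⟨hre, him⟩ := Complex.le_def.1 hle
  obtain ⟨hre', -⟩ := Complex.le_def.1 hge
  rw [← Complex.re_add_im (φ R), him]
  simpa [abs_le] using ⟨by simpa using hre', by simpa using hre⟩

theorem IsState.norm_apply_le (hφ : IsState φ) {c : C(X, ℂ)} {C : ℝ} (hc : ∀ x, ‖c x‖ ≤ C) :
    ‖φ c‖ ≤ 2 * C := by
  let re : C(X, ℝ) := ⟨fun x => (c x).re, by fun_prop⟩
  let im : C(X, ℝ) := ⟨fun x => (c x).im, by fun_prop⟩
  have hc' : c = (Complex.ofRealCLM : C(ℝ, ℂ)).comp re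
      + Complex.I • (Complex.ofRealCLM : C(ℝ, ℂ)).comp im := by
    ext1 x
    simp [re, im, mul_comm Complex.I]
  calc ‖φ c‖ ≤ ‖φ ((Complex.ofRealCLM : C(ℝ, ℂ)).comp re)‖
        + ‖φ ((Complex.ofRealCLM : C(ℝ, ℂ)).comp im)‖ := by
        rw [hc', map_add, map_smul]
        refine (norm_add_le _ _).trans ?_
        simp
    _ ≤ C + C := add_le_add
        (hφ.norm_apply_ofReal_le fun x => (Complex.abs_re_le_norm _).trans (hc x))
        (hφ.norm_apply_ofReal_le fun x => (Complex.abs_im_le_norm _).trans (hc x))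
    _ = 2 * C := by ring

end States

section Rho

variable {d : X → X → ℝ} {μ ν : C(X, ℂ) →L[ℂ] ℂ}

theorem enorm_sub_le_rho {b : C(X, ℂ)} (hb : ∀ p q, ‖b p - b q‖ ≤ d p q) :
    ‖μ b - ν b‖ₑ ≤ rho d μ ν :=
  le_iSup₂ (f := fun a (_ : a ∈ {a : C(X, ℂ) | ∀ p q : X, ‖a p - a q‖ ≤ d p q}) =>
    (‖μ a - ν a‖₊ : ℝ≥0∞)) b hb

theorem norm_sub_le_mul_of_rho_le {b : C(X, ℂ)} {K δ : ℝ} (hK : 0 < K) (hδ : 0 ≤ δ)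
    (hb : ∀ p q, ‖b p - b q‖ ≤ K * d p q) (hρ : rho d μ ν ≤ ENNReal.ofReal δ) :
    ‖μ b - ν b‖ ≤ K * δ := by
  have hb' : ∀ p q, ‖((K⁻¹ : ℂ) • b) p - ((K⁻¹ : ℂ) • b) q‖ ≤ d p q := fun p q => by
    rw [ContinuousMap.smul_apply, ContinuousMap.smul_apply, ← smul_sub, norm_smul, norm_inv,
      Complex.norm_of_nonneg hK.le, inv_mul_le_iff₀ hK]
    exact hb p q
  have h := (enorm_sub_le_rho hb').trans hρ
  rw [map_smul, map_smul, ← smul_sub, ← ofReal_norm, ENNReal.ofReal_le_ofReal_iff hδ, norm_smul,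
    norm_inv, Complex.norm_of_nonneg hK.le, inv_mul_le_iff₀ hK] at h
  exact h

theorem rho_evalCLM_le (d : X → X → ℝ) (p q : X) :
    rho d (ContinuousMap.evalCLM ℂ p) (ContinuousMap.evalCLM ℂ q) ≤ ENNReal.ofReal (d p q) :=
  iSup₂_le fun b hb => by
    rw [← enorm_eq_nnnorm, ← ofReal_norm]
    exact ENNReal.ofReal_le_ofReal (hb p q)

end Rho

theorem isState_evalCLM (x : X) : IsState (ContinuousMap.evalCLM ℂ x : C(X, ℂ) →L[ℂ] ℂ) := by
  refine ⟨rfl, fun b => ?_⟩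
  obtain ⟨hre, him⟩ := Complex.nonneg_iff.1 (star_mul_self_nonneg (b x))
  exact ⟨hre, him.symm⟩

section LipschitzApprox

variable {α : Type*} [PseudoMetricSpace α]

/-- The inf-convolution `x ↦ ⨅ y, f y + K * dist x y` is a `K`-Lipschitz minorant of `f`, and
for `K` large it is uniformly close to `f`. -/
theorem UniformContinuous.exists_lipschitzWith_dist_le {f : α → ℝ} (hf : UniformContinuous f)
    (hfb : Bornology.IsBounded (Set.range f)) {ε : ℝ} (hε : 0 < ε) :
    ∃ (K : ℝ≥0) (g : α → ℝ), LipschitzWith K g ∧ ∀ x, dist (f x) (g x) ≤ ε := by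
  obtain ⟨δ, hδ, hfδ⟩ := Metric.uniformContinuous_iff.1 hf ε hε
  obtain ⟨C, hC⟩ := Metric.isBounded_iff.1 hfb
  have hfC : ∀ x y, f x ≤ f y + C := fun x y => by
    have := hC (Set.mem_range_self x) (Set.mem_range_self y)
    rw [Real.dist_eq] at this
    linarith [le_abs_self (f x - f y)]
  set K : ℝ≥0 := Real.toNNReal (C / δ)
  have hKδ : C ≤ K * δ := by
    rw [← div_le_iff₀ hδ]
    exact Real.le_coe_toNNReal _
  let g : α → ℝ := fun x => ⨅ y, f y + K * dist x y
  have hbdd : ∀ x, BddBelow (Set.range fun y => f y + K * dist x y) := fun x =>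
    ⟨f x - C, Set.forall_mem_range.2 fun y => by
      nlinarith [hfC x y, dist_nonneg (x := x) (y := y), K.coe_nonneg]⟩
  have hg_le : ∀ x, g x ≤ f x := fun x => by
    simpa using ciInf_le (hbdd x) x
  have hle_g : ∀ x, f x - ε ≤ g x := fun x => by
    have : Nonempty α := ⟨x⟩
    refine le_ciInf fun y => ?_
    rcases lt_or_ge (dist x y) δ with hxy | hxy
    · have := hfδ hxy
      rw [Real.dist_eq, abs_lt] at this
      nlinarith [dist_nonneg (x := x) (y := y), K.coe_nonneg]
    · nlinarith [hfC x y, mul_le_mul_of_nonneg_left hxy K.coe_nonneg]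
  refine ⟨K, g, LipschitzWith.of_le_add_mul K fun x x' => ?_, fun x => ?_⟩
  · have : Nonempty α := ⟨x⟩
    rw [← sub_le_iff_le_add]
    refine le_ciInf fun y => ?_
    calc g x - K * dist x x' ≤ f y + K * dist x y - K * dist x x' := by
          gcongr; exact ciInf_le (hbdd x) y
      _ ≤ f y + K * dist x' y := by
          nlinarith [dist_triangle_left x y x', K.coe_nonneg, dist_comm x x']
  · rw [Real.dist_eq, abs_le]
    constructor <;> linarith [hg_le x, hle_g x]

theorem Continuous.exists_lipschitzWith_dist_le [CompactSpace α] {f : α → ℂ} (hf : Continuous f)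
    {ε : ℝ} (hε : 0 < ε) :
    ∃ (K : ℝ≥0) (g : α → ℂ), LipschitzWith K g ∧ ∀ x, dist (f x) (g x) ≤ ε := by
  have approx : ∀ h : ℂ → ℝ, Continuous h → ∃ (K : ℝ≥0) (g : α → ℝ),
      LipschitzWith K g ∧ ∀ x, dist (h (f x)) (g x) ≤ ε / 2 := fun h hh =>
    (CompactSpace.uniformContinuous_of_continuous (hh.comp hf)).exists_lipschitzWith_dist_le
      (isCompact_range (hh.comp hf)).isBounded (half_pos hε)
  obtain ⟨K₁, F, hF, hfF⟩ := approx Complex.re Complex.continuous_re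
  obtain ⟨K₂, G, hG, hfG⟩ := approx Complex.im Complex.continuous_im
  refine ⟨K₁ + K₂, fun x => F x + G x * Complex.I, ?_, fun x => ?_⟩
  · refine LipschitzWith.of_dist_le_mul fun x y => ?_
    calc dist (F x + G x * Complex.I) (F y + G y * Complex.I)
        ≤ dist (F x) (F y) + dist (G x) (G y) := by
          simpa [dist_eq_norm, Real.dist_eq] using
            Complex.norm_le_abs_re_add_abs_im (F x + G x * Complex.I - (F y + G y * Complex.I))
      _ ≤ K₁ * dist x y + K₂ * dist x y := add_le_add (hF.dist_le_mul x y) (hG.dist_le_mul x y)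
      _ = ↑(K₁ + K₂) * dist x y := by push_cast; ring
  · calc dist (f x) (F x + G x * Complex.I)
        ≤ |(f x).re - F x| + |(f x).im - G x| := by
          simpa [dist_eq_norm] using
            Complex.norm_le_abs_re_add_abs_im (f x - (F x + G x * Complex.I))
      _ ≤ ε / 2 + ε / 2 := add_le_add (hfF x) (hfG x)
      _ = ε := add_halves ε

end LipschitzApprox

/-- A copy of `α` forgetting its topology, to carry a semi metric as a `PseudoMetricSpace`. -/
def WithDist (α : Type*) : Type _ := α

abbrev WithDist.pseudoMetricSpace {α : Type*} (d : α → α → ℝ) (d_refl : ∀ x, d x x = 0)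
    (d_symm : ∀ x y, d x y = d y x) (d_triangle : ∀ x y z, d x z ≤ d x y + d y z) :
    PseudoMetricSpace (WithDist α) where
  dist := d
  dist_self := d_refl
  dist_comm := d_symm
  dist_triangle := d_triangle

def toWithDist {α : Type*} : α → WithDist α := id

theorem exists_lipschitz_approx [CompactSpace X] {d : X → X → ℝ} (d_refl : ∀ x, d x x = 0)
    (d_symm : ∀ x y, d x y = d y x) (d_triangle : ∀ x y z, d x z ≤ d x y + d y z)
    (hweaker : ∀ (x : X) (ε : ℝ), 0 < ε → ∃ U : Set X, IsOpen U ∧ x ∈ U ∧ ∀ y ∈ U, d x y < ε)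
    {a : C(X, ℂ)} (ha : ∀ (x : X) (ε : ℝ), 0 < ε → ∃ δ > 0, ∀ y : X, d y x < δ → ‖a y - a x‖ < ε)
    {ε : ℝ} (hε : 0 < ε) :
    ∃ K > 0, ∃ b : C(X, ℂ), (∀ p q, ‖b p - b q‖ ≤ K * d p q) ∧ ∀ x, ‖a x - b x‖ ≤ ε := by
  let _ := WithDist.pseudoMetricSpace d d_refl d_symm d_triangle
  have hid : Continuous (toWithDist : X → WithDist X) := by
    refine continuous_iff_continuousAt.2 fun x => ?_
    rw [ContinuousAt, Metric.tendsto_nhds]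
    intro ε hε
    obtain ⟨U, hU, hxU, hUε⟩ := hweaker x ε hε
    refine Filter.eventually_of_mem (hU.mem_nhds hxU) fun y hy => ?_
    show d y x < ε
    exact d_symm x y ▸ hUε y hy
  have : CompactSpace (WithDist X) := Function.surjective_id.compactSpace hid
  have ha' : Continuous fun y : WithDist X => a y :=
    Metric.continuous_iff.2 fun x ε hε => by simp only [dist_eq_norm]; exact ha x ε hε
  obtain ⟨K, g, hg, hag⟩ := ha'.exists_lipschitzWith_dist_le hε
  refine ⟨K + 1, by positivity, ⟨g ∘ toWithDist, hg.continuous.comp hid⟩, fun p q => ?_,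
    fun x => by rw [← dist_eq_norm]; exact hag x⟩
  calc ‖g p - g q‖ = dist (g p) (g q) := (dist_eq_norm _ _).symm
    _ ≤ K * d p q := hg.dist_le_mul p q
    _ ≤ (K + 1) * d p q := by
        gcongr
        · exact dist_nonneg (x := toWithDist p) (y := toWithDist q)
        · linarith

theorem IsState.norm_apply_sub_apply_le {ν ν' : C(X, ℂ) →L[ℂ] ℂ} (hν : IsState ν)
    (hν' : IsState ν')
    {d : X → X → ℝ} {a b : C(X, ℂ)} {K δ ε : ℝ} (hK : 0 < K) (hδ : 0 ≤ δ)
    (hb : ∀ p q, ‖b p - b q‖ ≤ K * d p q) (hab : ∀ x, ‖a x - b x‖ ≤ ε)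
    (hρ : rho d ν' ν ≤ ENNReal.ofReal δ) :
    ‖ν' a - ν a‖ ≤ 4 * ε + K * δ := by
  have hab' : ∀ x, ‖(a - b) x‖ ≤ ε := hab
  calc ‖ν' a - ν a‖ = ‖ν' (a - b) - ν (a - b) + (ν' b - ν b)‖ := by
        rw [map_sub, map_sub, sub_sub_sub_comm, sub_add_cancel]
    _ ≤ ‖ν' (a - b)‖ + ‖ν (a - b)‖ + ‖ν' b - ν b‖ :=
        (norm_add_le _ _).trans (by gcongr; exact norm_sub_le _ _)
    _ ≤ 2 * ε + 2 * ε + K * δ := by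
        gcongr
        exacts [hν'.norm_apply_le hab', hν.norm_apply_le hab',
          norm_sub_le_mul_of_rho_le hK hδ hb hρ]
    _ = 4 * ε + K * δ := by ring

theorem continuous_d_iff_continuous_rho_general [CompactSpace X] (d : X → X → ℝ)
    (d_refl : ∀ x, d x x = 0)
    (d_symm : ∀ x y, d x y = d y x)
    (d_triangle : ∀ x y z, d x z ≤ d x y + d y z)
    (hweaker : ∀ (x : X) (ε : ℝ), 0 < ε →
      ∃ U : Set X, IsOpen U ∧ x ∈ U ∧ ∀ y ∈ U, d x y < ε)
    (a : C(X, ℂ)) :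
    (∀ (x : X) (ε : ℝ), 0 < ε → ∃ δ > 0, ∀ y : X, d y x < δ → ‖a y - a x‖ < ε) ↔
      (∀ ν : C(X, ℂ) →L[ℂ] ℂ, IsState ν → ∀ ε : ℝ, 0 < ε → ∃ δ : ℝ, 0 < δ ∧
        ∀ ν' : C(X, ℂ) →L[ℂ] ℂ, IsState ν' →
          rho d ν' ν < ENNReal.ofReal δ → ‖ν' a - ν a‖ < ε) := by
  constructor
  · intro ha ν hν ε hε
    obtain ⟨K, hK, b, hb, hab⟩ :=
      exists_lipschitz_approx d_refl d_symm d_triangle hweaker ha (by positivity : 0 < ε / 8)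
    refine ⟨ε / (8 * K), by positivity, fun ν' hν' hρ => ?_⟩
    calc ‖ν' a - ν a‖ ≤ 4 * (ε / 8) + K * (ε / (8 * K)) :=
          hν.norm_apply_sub_apply_le hν' hK (by positivity) hb hab hρ.le
      _ < ε := by field_simp; linarith
  · intro hρ x ε hε
    obtain ⟨δ, hδ, hx⟩ := hρ _ (isState_evalCLM x) ε hε
    exact ⟨δ, hδ, fun y hy => hx _ (isState_evalCLM y)
      ((rho_evalCLM_le d y x).trans_lt ((ENNReal.ofReal_lt_ofReal_iff hδ).2 hy))⟩

/-- Let `(X, τ)` be compact Hausdorff and `d` a semi metric on `X` whose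
induced topology is weaker than `τ`, and let `ρ` be the induced Monge–Kantorovich semi metric
on the state space of `C(X, ℂ)`.  Then for `a ∈ C(X, ℂ)` the following are equivalent:
(1) `a` is continuous with respect to the topology induced by `d`;
(2) the map `ν ↦ ν a` on states is continuous with respect to `ρ`. -/
theorem continuous_d_iff_continuous_rho [CompactSpace X] [T2Space X] (d : X → X → ℝ)
    (d_nonneg : ∀ x y, 0 ≤ d x y)
    (d_refl : ∀ x, d x x = 0)
    (d_symm : ∀ x y, d x y = d y x)
    (d_triangle : ∀ x y z, d x z ≤ d x y + d y z)
    (hweaker : ∀ (x : X) (ε : ℝ), 0 < ε →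
      ∃ U : Set X, IsOpen U ∧ x ∈ U ∧ ∀ y ∈ U, d x y < ε)
    (a : C(X, ℂ)) :
    (∀ (x : X) (ε : ℝ), 0 < ε → ∃ δ > 0, ∀ y : X, d y x < δ → ‖a y - a x‖ < ε) ↔
      (∀ ν : C(X, ℂ) →L[ℂ] ℂ, IsState ν → ∀ ε : ℝ, 0 < ε → ∃ δ : ℝ, 0 < δ ∧
        ∀ ν' : C(X, ℂ) →L[ℂ] ℂ, IsState ν' →
          rho d ν' ν < ENNReal.ofReal δ → ‖ν' a - ν a‖ < ε) :=
  continuous_d_iff_continuous_rho_general d d_refl d_symm d_triangle hweaker a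

end
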